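/- Incompleteness of cost-LPR: let F = {x∨y∨b₁, ¬x∨b₂, ¬y∨b₃} with blocking variables b₁, b₂, b₃. Then cost(F) = 1, but no cost-LPR derivation from F contains a unit clause bᵢ for any i ∈ {1,2,3}; in particular the cost-LPR calculus (and hence the cost-BC calculus) cannot prove cost(F) ≥ 1. -/

import Mathlib

namespace PaperMaxSAT

/-- Variables are natural numbers. -/
abbrev Var := ℕ

/-- A literal is a variable together with a polarity. -/
abbrev Lit := Var × Bool

/-- Negation of a literal. -/
def negLit (l : Lit) : Lit := (l.1, !l.2)

/-- A clause is a finite set of literals. -/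
abbrev Clause := Finset Lit

/-- A CNF formula is a finite multiset of clauses. -/
abbrev CNF := Multiset Clause

/-- A tautological clause contains a literal together with its negation. -/
def isTaut (C : Clause) : Prop := ∃ l ∈ C, negLit l ∈ C

/-- The value of a substitution at a variable: a Boolean constant or a literal. -/
abbrev SubVal := Bool ⊕ Lit

/-- Negation on substitution values. -/
def negSV : SubVal → SubVal
  | .inl b => .inl !b
  | .inr l => .inr (negLit l)

/-- A substitution maps each variable to `0`, `1` or a literal. -/
abbrev Sub := Var → SubVal

/-- Applying a substitution to a literal, respecting `σ(¬x) = ¬σ(x)`. -/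
def appLit (σ : Sub) (l : Lit) : SubVal :=
  if l.2 then σ l.1 else negSV (σ l.1)

/-- The identity substitution. -/
def idSub : Sub := fun v => .inr (v, true)

/-- `σ(C) = 1` : some literal of `C` is mapped to true by `σ`. -/
def clauseTrue (σ : Sub) (C : Clause) : Prop := ∃ l ∈ C, appLit σ l = Sum.inl true

instance (σ : Sub) (C : Clause) : Decidable (clauseTrue σ C) := by
  unfold clauseTrue; infer_instance

/-- `C↾σ` : the clause whose literals are the images under `σ` of the literals
of `C` mapped to literals (literals mapped to `0` are dropped). -/
def restrictClause (σ : Sub) (C : Clause) : Clause :=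
  C.biUnion (fun l => match appLit σ l with
    | .inr m => {m}
    | _ => (∅ : Clause))

/-- `Γ↾σ` : restrict every clause of `Γ`; clauses mapped to `1` are removed. -/
def restrictCNF (σ : Sub) (Γ : CNF) : CNF :=
  (Γ.filter (fun C => ¬ clauseTrue σ C)).map (restrictClause σ)

/-- `σ ⊨ C` : `σ(C) = 1` or `σ(C)` is tautological. -/
def subSat (σ : Sub) (C : Clause) : Prop :=
  clauseTrue σ C ∨ isTaut (restrictClause σ C)

/-- The assignment `¬C`, setting all literals of `C` to false. -/
def negSub (C : Clause) : Sub := fun v =>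
  if (v, true) ∈ C then .inl false
  else if (v, false) ∈ C then .inl true
  else .inr (v, true)

/-- The substitution setting the literal `l` to true and touching nothing else. -/
def litSub (l : Lit) : Sub := fun v => if v = l.1 then .inl l.2 else .inr (v, true)

/-- Unit propagation derives the empty clause. -/
inductive UPFalse : CNF → Prop
  | empty {Γ : CNF} : (∅ : Clause) ∈ Γ → UPFalse Γ
  | step {Γ : CNF} (l : Lit) : ({l} : Clause) ∈ Γ →
      UPFalse (restrictCNF (litSub l) Γ) → UPFalse Γ

/-- The unit clauses `¬l` for `l ∈ C`. -/
def negUnits (C : Clause) : CNF := C.val.map (fun l => ({negLit l} : Clause))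

/-- `Γ ⊢₁ C` : unit propagation on `Γ↾¬C` produces the empty clause. -/
def UPimplies (Γ : CNF) (C : Clause) : Prop := UPFalse (Γ + negUnits C)

/-- `Γ ⊢₁ Δ` : `Γ ⊢₁ D` for every `D ∈ Δ`. -/
def UPimpliesAll (Γ Δ : CNF) : Prop := ∀ D ∈ Δ, UPimplies Γ D

/-- Total assignments. -/
abbrev TAssign := Var → Bool

/-- A total assignment satisfies a clause. -/
def satC (α : TAssign) (C : Clause) : Prop := ∃ l ∈ C, α l.1 = l.2

instance (α : TAssign) (C : Clause) : Decidable (satC α C) := by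
  unfold satC; infer_instance

/-- A total assignment satisfies a CNF. -/
def satCNF (α : TAssign) (Γ : CNF) : Prop := ∀ C ∈ Γ, satC α C

/-- `τ ∘ σ` : composition of a total assignment with a substitution. -/
def comp (τ : TAssign) (σ : Sub) : TAssign := fun v =>
  match σ v with
  | .inl b => b
  | .inr l => if l.2 then τ l.1 else !(τ l.1)

/-- `τ` extends the assignment `¬C`. -/
def extendsNeg (τ : TAssign) (C : Clause) : Prop := ∀ l ∈ C, τ l.1 = !l.2

/-- The cost of a total assignment w.r.t. a set `B` of blocking variables:
the number of blocking variables set to true. -/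
def cost (B : Finset Var) (α : TAssign) : ℕ := (B.filter (fun b => α b = true)).card

/-- The cost of a MaxSAT instance encoded with blocking variables `B`:
the minimum cost of a satisfying total assignment. -/
noncomputable def costCNF (B : Finset Var) (Γ : CNF) : ℕ :=
  sInf {k | ∃ α : TAssign, satCNF α Γ ∧ cost B α = k}

/-- `σ` witnesses that `C` is cost-SR w.r.t. `Γ` (with blocking variables `B`):
the redundancy condition `Γ↾¬C ⊢₁ (Γ ∪ {C})↾σ` and the cost condition. -/
def CostSRwit (B : Finset Var) (Γ : CNF) (C : Clause) (σ : Sub) : Prop :=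
  UPimpliesAll (restrictCNF (negSub C) Γ) (restrictCNF σ (C ::ₘ Γ)) ∧
  ∀ τ : TAssign, extendsNeg τ C → cost B (comp τ σ) ≤ cost B τ

/-- `C` is cost-SR w.r.t. `Γ`. -/
def CostSR (B : Finset Var) (Γ : CNF) (C : Clause) : Prop := ∃ σ, CostSRwit B Γ C σ

/-- A substitution which is an assignment: every value is `0`, `1`,
or the variable itself. -/
def isAssign (σ : Sub) : Prop :=
  ∀ v, σ v = .inl true ∨ σ v = .inl false ∨ σ v = .inr (v, true)

/-- The variables of a clause. -/
def varsClause (C : Clause) : Finset Var := C.image Prod.fst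

/-- The variables of a CNF. -/
def varsCNF (Γ : CNF) : Finset Var := (Γ.map varsClause).sup

/-- Membership in the domain of an assignment. -/
def subDom (σ : Sub) (v : Var) : Prop := ∃ b : Bool, σ v = .inl b

/-- `C` is cost-PR w.r.t. `Γ`: cost-SR witnessed by an assignment. -/
def CostPR (B : Finset Var) (Γ : CNF) (C : Clause) : Prop :=
  ∃ σ, CostSRwit B Γ C σ ∧ isAssign σ

/-- `C` is cost-SPR w.r.t. `Γ`: cost-SR witnessed by an assignment with
domain `dom(¬C) = Var(C)`. -/
def CostSPR (B : Finset Var) (Γ : CNF) (C : Clause) : Prop :=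
  ∃ σ, CostSRwit B Γ C σ ∧ isAssign σ ∧ (∀ v, subDom σ v ↔ v ∈ varsClause C)

/-- `C` is cost-LPR w.r.t. `Γ`: cost-SR witnessed by an assignment with
domain `dom(¬C)` differing from `¬C` on exactly one variable. -/
def CostLPR (B : Finset Var) (Γ : CNF) (C : Clause) : Prop :=
  ∃ σ, CostSRwit B Γ C σ ∧ isAssign σ ∧ (∀ v, subDom σ v ↔ v ∈ varsClause C) ∧
    ((varsClause C).filter (fun v => σ v ≠ negSub C v)).card = 1

/-- `D` is a resolvent of `E₁` and `E₂`. -/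
def resolvent (D E₁ E₂ : Clause) : Prop :=
  ∃ x : Var, (x, true) ∈ E₁ ∧ (x, false) ∈ E₂ ∧
    D = E₁.erase (x, true) ∪ E₂.erase (x, false)

/-- A derivation from `Γ` in the calculus with redundancy rule `Red`:
every clause of the list is in `Γ`, a weakening of an earlier clause,
a resolvent of two earlier clauses, or redundant (w.r.t. `Red`) relative to
`Γ` together with the earlier clauses, using no new variables. -/
def IsDeriv (Red : Finset Var → CNF → Clause → Prop) (B : Finset Var) (Γ : CNF)
    (L : List Clause) : Prop :=
  ∀ i, ∀ hi : i < L.length,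
    L[i] ∈ Γ ∨
    (∃ j, ∃ hj : j < i, L[j]'(hj.trans hi) ⊆ L[i]) ∨
    (∃ j k, ∃ hj : j < i, ∃ hk : k < i,
      resolvent L[i] (L[j]'(hj.trans hi)) (L[k]'(hk.trans hi))) ∨
    (Red B (Γ + (↑(L.take i) : CNF)) L[i] ∧ varsClause L[i] ⊆ varsCNF Γ)

/-- `C ∨ ℓ` is a cost blocked clause (cost-BC) w.r.t. `Γ` and `ℓ`. -/
def CostBC (B : Finset Var) (Γ : CNF) (C : Clause) (l : Lit) : Prop :=
  (∀ D ∈ Γ, negLit l ∈ D → isTaut (C ∪ D.erase (negLit l))) ∧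
  ¬(l.2 = true ∧ l.1 ∈ B)

/-- Hamming distance between two total assignments, over the variables in `V`. -/
def HD (V : Finset Var) (α β : TAssign) : ℕ := (V.filter (fun v => α v ≠ β v)).card

/-- `flip(C, σ) ≥ d` : some total assignment `τ` extending `¬C` has
Hamming distance (over `V`) at least `d` from `τ ∘ σ`. -/
def flipGE (V : Finset Var) (C : Clause) (σ : Sub) (d : ℕ) : Prop :=
  ∃ τ : TAssign, extendsNeg τ C ∧ d ≤ HD V τ (comp τ σ)


/-- The formula `F = {x∨y∨b₁, ¬x∨b₂, ¬y∨b₃}` with `x = 0`, `y = 1`,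
`b₁ = 2`, `b₂ = 3`, `b₃ = 4`. -/
def Fexample : CNF :=
  { ({(0, true), (1, true), (2, true)} : Clause),
    ({(0, false), (3, true)} : Clause),
    ({(1, false), (4, true)} : Clause) }

/-- The blocking variables `b₁, b₂, b₃` of `Fexample`. -/
def Bexample : Finset Var := {2, 3, 4}

/-!
The cost-1 models `{x, b₂}` and `{y, b₃}` of `F` are isolated: flipping any single variable
yields a non-model or a model of larger cost. A cost-LPR step with witness `σ` sends a model `τ`
falsifying the new clause `C` to `τ ∘ σ`, which is `τ` with exactly one variable flipped and is a
model of cost at most `cost τ`. Hence an isolated model satisfies every clause of a cost-LPR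
derivation (weakening and resolution being sound), while each unit `bᵢ` is falsified by one of
the two.
-/

section Semantics

def evalSV (α : TAssign) : SubVal → Bool
  | .inl b => b
  | .inr l => if l.2 then α l.1 else !(α l.1)

lemma comp_apply (τ : TAssign) (σ : Sub) (v : Var) : comp τ σ v = evalSV τ (σ v) := by
  unfold comp evalSV; cases σ v <;> rfl

lemma evalSV_negSV (α : TAssign) (s : SubVal) : evalSV α (negSV s) = !(evalSV α s) := by
  rcases s with b | ⟨x, _ | _⟩ <;> simp [negSV, negLit, evalSV]

lemma comp_apply_eq_iff (α : TAssign) (σ : Sub) (l : Lit) :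
    comp α σ l.1 = l.2 ↔ evalSV α (appLit σ l) = true := by
  rcases l with ⟨x, _ | _⟩ <;> simp [comp_apply, appLit, evalSV_negSV]

lemma evalSV_inr_eq_true_iff (α : TAssign) (m : Lit) :
    evalSV α (.inr m) = true ↔ α m.1 = m.2 := by
  rcases m with ⟨y, _ | _⟩ <;> simp [evalSV]

lemma mem_restrictClause {σ : Sub} {C : Clause} {m : Lit} :
    m ∈ restrictClause σ C ↔ ∃ l ∈ C, appLit σ l = .inr m := by
  simp only [restrictClause, Finset.mem_biUnion]
  refine exists_congr fun l => and_congr_right fun _ => ?_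
  rcases appLit σ l with b | m' <;> simp [eq_comm]

lemma mem_restrictCNF {σ : Sub} {Γ : CNF} {D : Clause} :
    D ∈ restrictCNF σ Γ ↔ ∃ C ∈ Γ, ¬ clauseTrue σ C ∧ restrictClause σ C = D := by
  simp [restrictCNF, and_assoc]

lemma satC_comp_iff (α : TAssign) (σ : Sub) (C : Clause) :
    satC (comp α σ) C ↔ clauseTrue σ C ∨ satC α (restrictClause σ C) := by
  simp only [satC, clauseTrue, comp_apply_eq_iff, mem_restrictClause]
  constructor
  · rintro ⟨l, hl, hsat⟩
    rcases h : appLit σ l with b | m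
    · rw [h] at hsat
      exact .inl ⟨l, hl, by rw [h, show b = true from hsat]⟩
    · rw [h, evalSV_inr_eq_true_iff] at hsat
      exact .inr ⟨m, ⟨l, hl, h⟩, hsat⟩
  · rintro (⟨l, hl, h⟩ | ⟨m, ⟨l, hl, h⟩, hsat⟩)
    · exact ⟨l, hl, by rw [h]; rfl⟩
    · exact ⟨l, hl, by rwa [h, evalSV_inr_eq_true_iff]⟩

lemma satCNF_comp_iff (α : TAssign) (σ : Sub) (Γ : CNF) :
    satCNF (comp α σ) Γ ↔ satCNF α (restrictCNF σ Γ) := by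
  constructor
  · intro h D hD
    obtain ⟨C, hC, hC1, rfl⟩ := mem_restrictCNF.1 hD
    exact ((satC_comp_iff α σ C).1 (h C hC)).resolve_left hC1
  · intro h C hC
    rw [satC_comp_iff]
    by_cases hC1 : clauseTrue σ C
    · exact .inl hC1
    · exact .inr (h _ (mem_restrictCNF.2 ⟨C, hC, hC1, rfl⟩))

lemma satC_iff_not_extendsNeg {α : TAssign} {C : Clause} : satC α C ↔ ¬ extendsNeg α C := by
  simp only [satC, extendsNeg, not_forall, exists_prop]
  refine exists_congr fun l => and_congr_right fun _ => ?_
  cases α l.1 <;> cases l.2 <;> simp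

lemma satCNF_negUnits_iff {α : TAssign} {C : Clause} :
    satCNF α (negUnits C) ↔ extendsNeg α C := by
  simp only [satCNF, negUnits, Multiset.forall_mem_map_iff, satC, Finset.mem_singleton,
    exists_eq_left, negLit]
  rfl

lemma comp_litSub {α : TAssign} {l : Lit} (h : α l.1 = l.2) : comp α (litSub l) = α := by
  funext v
  rcases l with ⟨x, p⟩
  by_cases hv : v = x
  · subst hv; simp_all [comp_apply, litSub, evalSV]
  · simp [comp_apply, litSub, hv, evalSV]

lemma comp_negSub {α : TAssign} {C : Clause} (h : extendsNeg α C) : comp α (negSub C) = α := by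
  funext v
  by_cases h1 : (v, true) ∈ C
  · simpa [comp_apply, negSub, h1, evalSV] using (h _ h1).symm
  by_cases h2 : (v, false) ∈ C
  · simpa [comp_apply, negSub, h1, h2, evalSV] using (h _ h2).symm
  · simp [comp_apply, negSub, h1, h2, evalSV]

theorem UPFalse.not_satCNF {Γ : CNF} (h : UPFalse Γ) (α : TAssign) : ¬ satCNF α Γ := by
  induction h with
  | empty hmem => exact fun hα => by simpa [satC] using hα _ hmem
  | step l hmem _ ih =>
    intro hα
    obtain ⟨l', hl', hsat⟩ := hα _ hmem
    rw [Finset.mem_singleton] at hl'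
    subst hl'
    exact ih (by rwa [← satCNF_comp_iff, comp_litSub hsat])

theorem UPimplies.satC {Γ : CNF} {D : Clause} (h : UPimplies Γ D) {α : TAssign}
    (hα : satCNF α Γ) : satC α D :=
  satC_iff_not_extendsNeg.2 fun hext => h.not_satCNF α fun C hC =>
    (Multiset.mem_add.1 hC).elim (hα C) (satCNF_negUnits_iff.2 hext C)

theorem CostSRwit.satCNF_comp {B : Finset Var} {Γ : CNF} {C : Clause} {σ : Sub}
    (hw : CostSRwit B Γ C σ) {α : TAssign} (hΓ : satCNF α Γ) (hext : extendsNeg α C) :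
    satCNF (comp α σ) (C ::ₘ Γ) ∧ cost B (comp α σ) ≤ cost B α := by
  have hΓ' : satCNF α (restrictCNF (negSub C) Γ) := by
    rwa [← satCNF_comp_iff, comp_negSub hext]
  exact ⟨(satCNF_comp_iff α σ _).2 fun D hD => (hw.1 D hD).satC hΓ', hw.2 α hext⟩

lemma satC_of_subset {α : TAssign} {C D : Clause} (h : C ⊆ D) (hC : satC α C) : satC α D :=
  let ⟨l, hl, hv⟩ := hC
  ⟨l, h hl, hv⟩

lemma resolvent.satC {α : TAssign} {D E₁ E₂ : Clause} (h : resolvent D E₁ E₂)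
    (h₁ : satC α E₁) (h₂ : satC α E₂) : satC α D := by
  obtain ⟨x, hx₁, hx₂, rfl⟩ := h
  cases hx : α x
  · obtain ⟨l, hl, hv⟩ := h₁
    have hne : l ≠ (x, true) := by rintro rfl; simp_all
    exact ⟨l, Finset.mem_union_left _ (Finset.mem_erase.2 ⟨hne, hl⟩), hv⟩
  · obtain ⟨l, hl, hv⟩ := h₂
    have hne : l ≠ (x, false) := by rintro rfl; simp_all
    exact ⟨l, Finset.mem_union_right _ (Finset.mem_erase.2 ⟨hne, hl⟩), hv⟩

end Semantics

section LPR

lemma negSub_apply_of_mem {C : Clause} {α : TAssign} (hext : extendsNeg α C) {v : Var}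
    (hv : v ∈ varsClause C) : negSub C v = .inl (α v) := by
  obtain ⟨⟨x, p⟩, hl, rfl⟩ := Finset.mem_image.1 hv
  by_cases h1 : (x, true) ∈ C
  · simp [negSub, h1, (hext _ h1 : α x = !true)]
  · have h2 : (x, false) ∈ C := by cases p <;> simp_all
    simp [negSub, h1, h2, (hext _ h2 : α x = !false)]

theorem comp_eq_update_of_lprWitness {C : Clause} {σ : Sub} (hA : isAssign σ)
    (hdom : ∀ v, subDom σ v ↔ v ∈ varsClause C)
    (hcard : ((varsClause C).filter (fun v => σ v ≠ negSub C v)).card = 1)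
    {α : TAssign} (hext : extendsNeg α C) :
    ∃ v₀ ∈ varsClause C, comp α σ = Function.update α v₀ (!α v₀) := by
  obtain ⟨v₀, hv₀⟩ := Finset.card_eq_one.1 hcard
  have hdiff : ∀ v, v ∈ varsClause C ∧ σ v ≠ negSub C v ↔ v = v₀ := by
    simpa [Finset.ext_iff] using hv₀
  have hv₀C := ((hdiff v₀).2 rfl).1
  refine ⟨v₀, hv₀C, funext fun v => ?_⟩
  by_cases hvC : v ∈ varsClause C
  · obtain ⟨b, hb⟩ := (hdom v).2 hvC
    have hneg := negSub_apply_of_mem hext hvC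
    rw [comp_apply, hb]
    by_cases hv : v = v₀
    · subst hv
      have hb' : b ≠ α v := by simpa [hb, hneg] using ((hdiff v).2 rfl).2
      cases b <;> cases h : α v <;> simp_all [evalSV]
    · have : σ v = negSub C v := not_not.1 fun h => hv ((hdiff v).1 ⟨hvC, h⟩)
      rw [hb, hneg, Sum.inl.injEq] at this
      simp [evalSV, hv, this]
  · have hv : v ≠ v₀ := fun h => hvC (h ▸ hv₀C)
    have hσv : σ v = .inr (v, true) := by
      rcases hA v with h | h | h
      · exact absurd ((hdom v).1 ⟨_, h⟩) hvC
      · exact absurd ((hdom v).1 ⟨_, h⟩) hvC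
      · exact h
    simp [comp_apply, hσv, evalSV, hv]

def IsFlipIsolated (B : Finset Var) (Γ : CNF) (α : TAssign) : Prop :=
  satCNF α Γ ∧ ∀ v ∈ varsCNF Γ, satCNF (Function.update α v (!α v)) Γ →
    cost B α < cost B (Function.update α v (!α v))

lemma satCNF_add {α : TAssign} {Γ Δ : CNF} (hΓ : satCNF α Γ) (hΔ : satCNF α Δ) :
    satCNF α (Γ + Δ) :=
  fun C hC => (Multiset.mem_add.1 hC).elim (hΓ C) (hΔ C)

theorem CostLPR.satC_of_isFlipIsolated {B : Finset Var} {Γ Δ : CNF} {C : Clause}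
    (hC : CostLPR B (Γ + Δ) C) (hvars : varsClause C ⊆ varsCNF Γ) {α : TAssign}
    (hα : IsFlipIsolated B Γ α) (hΔ : satCNF α Δ) : satC α C := by
  refine satC_iff_not_extendsNeg.2 fun hext => ?_
  obtain ⟨σ, hw, hA, hdom, hcard⟩ := hC
  obtain ⟨hsat, hcost⟩ := hw.satCNF_comp (satCNF_add hα.1 hΔ) hext
  obtain ⟨v₀, hv₀, hflip⟩ := comp_eq_update_of_lprWitness hA hdom hcard hext
  rw [hflip] at hsat hcost
  have hflipΓ : satCNF (Function.update α v₀ (!α v₀)) Γ := fun D hD =>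
    hsat D (Multiset.mem_cons_of_mem (Multiset.mem_add.2 (.inl hD)))
  exact (hα.2 v₀ (hvars hv₀) hflipΓ).not_ge hcost

theorem IsDeriv.satC_of_isFlipIsolated {B : Finset Var} {Γ : CNF} {L : List Clause}
    (hL : IsDeriv CostLPR B Γ L) {α : TAssign} (hα : IsFlipIsolated B Γ α) :
    ∀ C ∈ L, satC α C := by
  suffices h : ∀ i (hi : i < L.length), satC α L[i] by
    intro C hC
    obtain ⟨i, hi, rfl⟩ := List.mem_iff_getElem.1 hC
    exact h i hi
  intro i
  induction i using Nat.strong_induction_on with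
  | _ i ih =>
    intro hi
    rcases hL i hi with hΓ | ⟨j, hj, hsub⟩ | ⟨j, k, hj, hk, hres⟩ | ⟨hred, hvars⟩
    · exact hα.1 _ hΓ
    · exact satC_of_subset hsub (ih j hj _)
    · exact hres.satC (ih j hj _) (ih k hk _)
    · refine hred.satC_of_isFlipIsolated hvars hα fun C hC => ?_
      obtain ⟨m, hm, rfl⟩ := List.mem_iff_getElem.1 (Multiset.mem_coe.1 hC)
      rw [List.getElem_take]
      exact ih m (by simp at hm; omega) _

end LPR

theorem costCNF_eq_of_forall_le {B : Finset Var} {Γ : CNF} {α : TAssign} (hα : satCNF α Γ)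
    (hmin : ∀ β, satCNF β Γ → cost B α ≤ cost B β) : costCNF B Γ = cost B α :=
  le_antisymm (Nat.sInf_le ⟨α, hα, rfl⟩)
    (le_csInf ⟨_, α, hα, rfl⟩ fun _ ⟨β, hβ, hk⟩ => hk ▸ hmin β hβ)

section Example

instance (α : TAssign) (Γ : CNF) : Decidable (satCNF α Γ) := by
  unfold satCNF; infer_instance

instance (B : Finset Var) (Γ : CNF) (α : TAssign) : Decidable (IsFlipIsolated B Γ α) := by
  unfold IsFlipIsolated; infer_instance

def modelXB₂ : TAssign := fun v => v == 0 || v == 3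

def modelYB₃ : TAssign := fun v => v == 1 || v == 4

lemma one_le_cost_of_satCNF_Fexample {α : TAssign} (hα : satCNF α Fexample) :
    1 ≤ cost Bexample α := by
  have h₁ := hα {(0, true), (1, true), (2, true)} (by simp [Fexample])
  have h₂ := hα {(0, false), (3, true)} (by simp [Fexample])
  have h₃ := hα {(1, false), (4, true)} (by simp [Fexample])
  simp only [satC, Finset.mem_insert, Finset.mem_singleton, exists_eq_or_imp, exists_eq_left]
    at h₁ h₂ h₃
  simp only [cost, Bexample, Finset.one_le_card, Finset.filter_nonempty_iff, Finset.mem_insert,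
    Finset.mem_singleton, exists_eq_or_imp, exists_eq_left]
  cases h0 : α 0 <;> cases h1 : α 1 <;> simp_all

theorem costCNF_Fexample : costCNF Bexample Fexample = 1 :=
  costCNF_eq_of_forall_le (α := modelXB₂) (by decide)
    fun _ hβ => one_le_cost_of_satCNF_Fexample hβ

lemma isFlipIsolated_modelXB₂ : IsFlipIsolated Bexample Fexample modelXB₂ := by decide

lemma isFlipIsolated_modelYB₃ : IsFlipIsolated Bexample Fexample modelYB₃ := by decide

end Example

/-- incompleteness of cost-LPR: `cost(F) = 1`, but no cost-LPR
derivation from `F` contains a unit clause `bᵢ` for any blocking variable;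
in particular cost-LPR (hence cost-BC) cannot prove `cost(F) ≥ 1`. -/
theorem costLPR_incomplete :
    costCNF Bexample Fexample = 1 ∧
    ∀ L : List Clause, IsDeriv CostLPR Bexample Fexample L →
      ∀ b ∈ Bexample, ({(b, true)} : Clause) ∉ L := by
  refine ⟨costCNF_Fexample, fun L hL b hb hbL => ?_⟩
  have hX := hL.satC_of_isFlipIsolated isFlipIsolated_modelXB₂ _ hbL
  have hY := hL.satC_of_isFlipIsolated isFlipIsolated_modelYB₃ _ hbL
  simp only [Bexample, Finset.mem_insert, Finset.mem_singleton] at hb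
  rcases hb with rfl | rfl | rfl <;> revert hX hY <;> decide

end PaperMaxSAT
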